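/- Let k, n be natural numbers and let g be a homeomorphism of ℝ^k × ℝ^n satisfying (g p).1 = p.1 for every p (g preserves the first coordinate). For t ∈ ℝ define g^t : ℝ^k × ℝ^n → ℝ^k × ℝ^n by g^t(x, y) = (x, (g (t • x, y)).2). Then: (1) for every t, g^t is a homeomorphism, with inverse (x, y) ↦ (x, (g⁻¹ (t • x, y)).2); (2) g^1 = g; (3) each g^t preserves the first coordinate; and (4) the map (t, x, y) ↦ g^t(x, y) from ℝ × (ℝ^k × ℝ^n) to ℝ^k × ℝ^n is jointly continuous. (This is the Alexander trick deforming g to the product homeomorphism g^0(x, y) = (x, (g (0, y)).2).) -/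

import Mathlib

/-- Euclidean space `ℝ^k`. -/
noncomputable abbrev Euc (k : ℕ) := EuclideanSpace ℝ (Fin k)

/-! A homeomorphism `g` of `Z × Y` preserving the first coordinate is a continuous family of
homeomorphisms `g_z` of `Y`. Pulling this family back along any continuous `φ : X → Z` gives
the homeomorphism `(x, y) ↦ (x, g_{φ x} y)` of `X × Y`, inverted fiberwise by `g⁻¹`. The
Alexander trick is the pullback along `x ↦ t • x`, which at `t = 1` gives back `g`. -/

namespace Homeomorph

variable {X Y Z : Type*} [TopologicalSpace X] [TopologicalSpace Y] [TopologicalSpace Z]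

theorem symm_fst_eq_of_fst_eq {g : (Z × Y) ≃ₜ (Z × Y)} (hg : ∀ p, (g p).1 = p.1) (p : Z × Y) :
    (g.symm p).1 = p.1 := by
  conv_rhs => rw [← g.apply_symm_apply p]
  exact (hg _).symm

theorem mk_fst_snd_apply {g : (Z × Y) ≃ₜ (Z × Y)} (hg : ∀ p, (g p).1 = p.1) (p : Z × Y) :
    (p.1, (g p).2) = g p :=
  Prod.ext (hg p).symm rfl

theorem snd_symm_mk_snd {g : (Z × Y) ≃ₜ (Z × Y)} (hg : ∀ p, (g p).1 = p.1) (z : Z) (y : Y) :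
    (g.symm (z, (g (z, y)).2)).2 = y := by
  rw [mk_fst_snd_apply hg (z, y), g.symm_apply_apply]

def fiberwisePullback (g : (Z × Y) ≃ₜ (Z × Y)) (hg : ∀ p, (g p).1 = p.1) {φ : X → Z}
    (hφ : Continuous φ) : (X × Y) ≃ₜ (X × Y) where
  toFun p := (p.1, (g (φ p.1, p.2)).2)
  invFun p := (p.1, (g.symm (φ p.1, p.2)).2)
  left_inv p := Prod.ext rfl (snd_symm_mk_snd hg _ _)
  right_inv p := Prod.ext rfl (snd_symm_mk_snd (g := g.symm) (symm_fst_eq_of_fst_eq hg) _ _)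
  continuous_toFun := by fun_prop
  continuous_invFun := by fun_prop

end Homeomorph

/-- The Alexander trick: for a homeomorphism `g` of `ℝ^k × ℝ^n` preserving the first
coordinate, the maps `g^t(x, y) = (x, (g (t • x, y)).2)` satisfy:
(1) each `g^t` is a homeomorphism with inverse `(x, y) ↦ (x, (g⁻¹ (t • x, y)).2)`;
(2) `g^1 = g`;
(3) each `g^t` preserves the first coordinate;
(4) `(t, x, y) ↦ g^t(x, y)` is jointly continuous. -/
theorem alexander_trick (k n : ℕ)
    (g : (Euc k × Euc n) ≃ₜ (Euc k × Euc n))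
    (hg : ∀ p : Euc k × Euc n, (g p).1 = p.1) :
    (∀ t : ℝ, ∃ h : (Euc k × Euc n) ≃ₜ (Euc k × Euc n),
      (⇑h = fun p : Euc k × Euc n => (p.1, (g (t • p.1, p.2)).2)) ∧
      (⇑h.symm = fun p : Euc k × Euc n => (p.1, (g.symm (t • p.1, p.2)).2))) ∧
    ((fun p : Euc k × Euc n => (p.1, (g ((1 : ℝ) • p.1, p.2)).2)) = ⇑g) ∧
    (∀ (t : ℝ) (p : Euc k × Euc n),
      ((p.1, (g (t • p.1, p.2)).2) : Euc k × Euc n).1 = p.1) ∧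
    Continuous (fun q : ℝ × (Euc k × Euc n) =>
      ((q.2.1, (g (q.1 • q.2.1, q.2.2)).2) : Euc k × Euc n)) := by
  refine ⟨fun t => ⟨g.fiberwisePullback hg (continuous_const_smul t), rfl, rfl⟩, ?_,
    fun _ _ => rfl, by fun_prop⟩
  funext p
  rw [one_smul, Homeomorph.mk_fst_snd_apply hg]
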